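/- arXiv:2409.11268 — 2 statements merged into one kernel-verified Lean document; each statement's English description precedes it below -/
import Mathlib

section
/- For all n ≥ 1, the forward difference a_{n+1} - a_n equals |B(2n-2)|, the number of binary partitions of 2n-2. -/
/-- `pre2 s` is the multiset of all pairwise products of two distinct entries
(by position) of the multiset `s`, i.e. the summands of `e₂` evaluated at `s`. -/
def pre2 (s : Multiset ℕ) : Multiset ℕ := (Multiset.powersetCard 2 s).map Multiset.prod

open Classical in
/-- The finset of binary partitions of `n`: partitions all of whose parts are powers of 2. -/
noncomputable def binaryPartitions (n : ℕ) : Finset (Nat.Partition n) :=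
  Finset.univ.filter fun l => ∀ p ∈ l.parts, ∃ i : ℕ, p = 2 ^ i

/-- `a n = m₁(ImB₂(n))`: the total number of parts equal to 1 in the image of `pre2`
on binary partitions of `n` with at least two parts; by injectivity this equals
`∑_{λ ∈ B(n)} C(m₁(λ), 2)`. -/
noncomputable def a (n : ℕ) : ℕ :=
  ∑ l ∈ binaryPartitions n, Nat.choose (l.parts.count 1) 2

/-!
Erasing one part `1` is a bijection from the binary partitions of `n + 1` that contain a `1`
onto `B(n)`; those without a `1` have only even parts, so there are none of an odd number, and
halving identifies those of `2m` with `B(m)`. Writing `T(n)` for the number of ones in all of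
`B(n)`, the first bijection and `C(k + 1, 2) = C(k, 2) + k` give `a(n + 1) = a(n) + T(n)` and
`T(n + 1) = T(n) + |B(n)|`, while both bijections give `|B(2m + 2)| = |B(2m)| + |B(m + 1)|`.
The last two recurrences, started from `T(1) = |B(0)|`, yield `T(m + 1) = |B(2m)|`.
-/

namespace Nat.Partition

def divPartsEquiv {n k : ℕ} (hk : 0 < k) :
    {p : (k * n).Partition // ∀ i ∈ p.parts, k ∣ i} ≃ n.Partition where
  toFun p := ⟨p.1.parts.map (· / k), fun hj => by
      obtain ⟨i, hi, rfl⟩ := Multiset.mem_map.1 hj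
      exact Nat.div_pos (Nat.le_of_dvd (p.1.parts_pos hi) (p.2 i hi)) hk,
    Nat.eq_of_mul_eq_mul_left hk <| by
      rw [← Multiset.sum_map_mul_left,
        Multiset.map_congr rfl fun i hi => Nat.mul_div_cancel' (p.2 i hi), Multiset.map_id',
        p.1.parts_sum]⟩
  invFun q := ⟨⟨q.parts.map (k * ·), fun hj => by
      obtain ⟨i, hi, rfl⟩ := Multiset.mem_map.1 hj
      exact Nat.mul_pos hk (q.parts_pos hi),
    by rw [Multiset.sum_map_mul_left, Multiset.map_id', q.parts_sum]⟩, by simp⟩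
  left_inv p := Subtype.ext <| Partition.ext <| by
    simp only [Multiset.map_map]
    exact (Multiset.map_congr rfl fun i hi => Nat.mul_div_cancel' (p.2 i hi)).trans
      (Multiset.map_id' _)
  right_inv q := Partition.ext <| by
    simp only [Multiset.map_map]
    exact (Multiset.map_congr rfl fun i _ => Nat.mul_div_cancel_left i hk).trans
      (Multiset.map_id' _)

@[simp]
theorem divPartsEquiv_apply_parts {n k : ℕ} (hk : 0 < k)
    (p : {p : (k * n).Partition // ∀ i ∈ p.parts, k ∣ i}) :
    (divPartsEquiv hk p).parts = p.1.parts.map (· / k) :=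
  rfl

@[simp]
theorem divPartsEquiv_symm_apply_parts {n k : ℕ} (hk : 0 < k) (q : n.Partition) :
    ((divPartsEquiv hk).symm q).1.parts = q.parts.map (k * ·) :=
  rfl

end Nat.Partition

open Nat.Partition

theorem mem_binaryPartitions {n : ℕ} {l : Nat.Partition n} :
    l ∈ binaryPartitions n ↔ ∀ p ∈ l.parts, ∃ i, p = 2 ^ i := by
  simp [binaryPartitions]

noncomputable def oneFreeBinaryPartitions (n : ℕ) : Finset (Nat.Partition n) :=
  (binaryPartitions n).filter fun l => 1 ∉ l.parts

theorem exists_eq_two_mul_two_pow_of_mem_oneFreeBinaryPartitions {n : ℕ} {l : Nat.Partition n}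
    (hl : l ∈ oneFreeBinaryPartitions n) {p : ℕ} (hp : p ∈ l.parts) :
    ∃ j, p = 2 * 2 ^ j := by
  rw [oneFreeBinaryPartitions, Finset.mem_filter, mem_binaryPartitions] at hl
  obtain ⟨i, rfl⟩ := hl.1 p hp
  rcases i with _ | j
  · exact absurd hp (by simpa using hl.2)
  · exact ⟨j, pow_succ' 2 j⟩

theorem two_dvd_of_mem_oneFreeBinaryPartitions {n : ℕ} {l : Nat.Partition n}
    (hl : l ∈ oneFreeBinaryPartitions n) {p : ℕ} (hp : p ∈ l.parts) : 2 ∣ p := by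
  obtain ⟨j, rfl⟩ := exists_eq_two_mul_two_pow_of_mem_oneFreeBinaryPartitions hl hp
  exact dvd_mul_right 2 _

theorem oneFreeBinaryPartitions_odd (m : ℕ) : oneFreeBinaryPartitions (2 * m + 1) = ∅ := by
  refine Finset.eq_empty_of_forall_notMem fun l hl => ?_
  have : 2 ∣ l.parts.sum :=
    Multiset.dvd_sum fun _ hp => two_dvd_of_mem_oneFreeBinaryPartitions hl hp
  rw [l.parts_sum] at this
  omega

theorem card_oneFreeBinaryPartitions_two_mul (m : ℕ) :
    (oneFreeBinaryPartitions (2 * m)).card = (binaryPartitions m).card := by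
  let e := divPartsEquiv (n := m) two_pos
  refine Finset.card_bij'
    (fun l hl => e ⟨l, fun _ hp => two_dvd_of_mem_oneFreeBinaryPartitions hl hp⟩)
    (fun l _ => (e.symm l).1)
    ?_ ?_ (fun l _ => by simp) (fun l _ => by simp)
  · intro l hl
    simp only [e, mem_binaryPartitions, divPartsEquiv_apply_parts, Multiset.mem_map,
      forall_exists_index, and_imp]
    rintro _ p hp rfl
    obtain ⟨j, rfl⟩ := exists_eq_two_mul_two_pow_of_mem_oneFreeBinaryPartitions hl hp
    exact ⟨j, by simp⟩
  · intro l hl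
    simp only [oneFreeBinaryPartitions, Finset.mem_filter, mem_binaryPartitions, e,
      divPartsEquiv_symm_apply_parts, Multiset.mem_map, forall_exists_index, and_imp]
    refine ⟨?_, ?_⟩
    · rintro _ p hp rfl
      obtain ⟨i, rfl⟩ := mem_binaryPartitions.1 hl p hp
      exact ⟨i + 1, (pow_succ' 2 i).symm⟩
    · rintro ⟨p, -, hp⟩
      omega

theorem sum_binaryPartitions_succ {M : Type*} [AddCommMonoid M] (g : ℕ → M) (n : ℕ) :
    ∑ l ∈ binaryPartitions (n + 1), g (l.parts.count 1) =
      (oneFreeBinaryPartitions (n + 1)).card • g 0 +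
        ∑ l ∈ binaryPartitions n, g (l.parts.count 1 + 1) := by
  let e := partitionWithPartEquiv (n := n + 1) (a := 1) le_rfl (by omega)
  have he (l) : (e l).parts = l.1.parts.erase 1 := partitionWithPartEquiv_apply_parts _ _ l
  have he_symm (l : n.Partition) : (e.symm l).1.parts = 1 ::ₘ l.parts :=
    partitionWithPartEquiv_symm_apply_parts (n := n + 1) (a := 1) _ _ l
  rw [← Finset.sum_filter_not_add_sum_filter _ (fun l => 1 ∈ l.parts)]
  congr 1
  · rw [oneFreeBinaryPartitions, ← Finset.sum_const]
    refine Finset.sum_congr rfl fun l hl => ?_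
    rw [Multiset.count_eq_zero.2 (Finset.mem_filter.1 hl).2]
  · symm
    refine Finset.sum_bij' (fun l _ => (e.symm l).1)
      (fun l hl => e ⟨l, (Finset.mem_filter.1 hl).2⟩) ?_ ?_
      (fun l _ => by simp [e]) (fun l _ => by simp [e])
      (fun l _ => by rw [he_symm, Multiset.count_cons_self])
    · intro l hl
      rw [Finset.mem_filter, mem_binaryPartitions, he_symm]
      refine ⟨fun p hp => ?_, Multiset.mem_cons_self 1 _⟩
      rcases Multiset.mem_cons.1 hp with rfl | hp
      · exact ⟨0, rfl⟩
      · exact mem_binaryPartitions.1 hl p hp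
    · intro l hl
      rw [mem_binaryPartitions, he]
      exact fun p hp => mem_binaryPartitions.1 (Finset.mem_filter.1 hl).1 p
        (Multiset.mem_of_mem_erase hp)

theorem card_binaryPartitions_succ (n : ℕ) :
    (binaryPartitions (n + 1)).card =
      (oneFreeBinaryPartitions (n + 1)).card + (binaryPartitions n).card := by
  simpa only [Finset.sum_const, smul_eq_mul, mul_one] using
    sum_binaryPartitions_succ (fun _ => (1 : ℕ)) n

theorem card_binaryPartitions_two_mul_succ (m : ℕ) :
    (binaryPartitions (2 * (m + 1))).card =
      (binaryPartitions (2 * m)).card + (binaryPartitions (m + 1)).card := by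
  have h := card_oneFreeBinaryPartitions_two_mul (m + 1)
  rw [show 2 * (m + 1) = 2 * m + 1 + 1 by ring] at h ⊢
  rw [card_binaryPartitions_succ, card_binaryPartitions_succ (2 * m), oneFreeBinaryPartitions_odd,
    h, Finset.card_empty, zero_add, add_comm]

noncomputable def totalOnes (n : ℕ) : ℕ :=
  ∑ l ∈ binaryPartitions n, l.parts.count 1

theorem totalOnes_zero : totalOnes 0 = 0 := by
  simp [totalOnes]

theorem totalOnes_succ (n : ℕ) : totalOnes (n + 1) = totalOnes n + (binaryPartitions n).card := by
  simpa only [totalOnes, id, smul_eq_mul, mul_zero, zero_add, Finset.sum_add_distrib,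
    Finset.sum_const, mul_one] using sum_binaryPartitions_succ id n

theorem a_succ (n : ℕ) : a (n + 1) = a n + totalOnes n := by
  have choose_two_succ (k : ℕ) : (k + 1).choose 2 = k.choose 2 + k := by
    rw [Nat.choose_succ_succ', Nat.choose_one_right, add_comm]
  simpa only [a, totalOnes, Nat.choose_zero_succ, smul_zero, zero_add, choose_two_succ,
    Finset.sum_add_distrib] using sum_binaryPartitions_succ (fun k => k.choose 2) n

theorem totalOnes_succ_eq_card_binaryPartitions_two_mul (m : ℕ) :
    totalOnes (m + 1) = (binaryPartitions (2 * m)).card := by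
  induction m with
  | zero => rw [totalOnes_succ, totalOnes_zero, zero_add]
  | succ m ih => rw [totalOnes_succ, ih, card_binaryPartitions_two_mul_succ]

theorem stmt_5 (n : ℕ) (hn : 1 ≤ n) :
    (a (n + 1) : ℤ) - (a n : ℤ) = ((binaryPartitions (2 * n - 2)).card : ℤ) := by
  obtain ⟨m, rfl⟩ := Nat.exists_eq_add_of_le' hn
  rw [a_succ, totalOnes_succ_eq_card_binaryPartitions_two_mul,
    show 2 * (m + 1) - 2 = 2 * m by omega]
  push_cast
  ring
end

section
/- For all n ≥ 0, a_n = b_n + b_{n+1}. -/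
/-- `b n = m₂(ImB₂(n))`: the total number of parts equal to 2 in the image of `pre2`
on binary partitions of `n` with at least two parts; by injectivity this equals
`∑_{λ ∈ B(n)} m₁(λ)·m₂(λ)`. -/
noncomputable def b (n : ℕ) : ℕ :=
  ∑ l ∈ binaryPartitions n, (l.parts.count 1) * (l.parts.count 2)

/-!
Adding a part `1` maps `B(n)` bijectively onto the partitions in `B(n+1)` that contain a `1`,
so `b (n+1) = ∑_{λ ∈ B(n)} (m₁ + 1) m₂` and the claim becomes
`∑_{λ ∈ B(n)} C(m₁, 2) = ∑_{λ ∈ B(n)} (2 m₁ + 1) m₂`.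
Write `C(m, 2) = ∑_{k ≥ 1, 2k ≤ m} (2 (m - 2k) + 1)`. For each `k`, replacing `2k` ones by `k`
twos is a bijection from the partitions with `m₁ ≥ 2k` onto those with `m₂ ≥ k`, and it carries
the weight `2 (m₁ - 2k) + 1` to `2 m₁ + 1`. Summing over `k`, every `λ` is counted with weight
`2 m₁ + 1` exactly `m₂` times.
-/

open Finset

namespace Nat.Partition

theorem count_parts_le {n : ℕ} (l : n.Partition) (i : ℕ) : l.parts.count i ≤ n := by
  have h : Multiset.card l.parts • 1 ≤ l.parts.sum :=
    Multiset.card_nsmul_le_sum fun _ hj ↦ l.parts_pos hj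
  rw [smul_eq_mul, mul_one, l.parts_sum] at h
  exact (Multiset.count_le_card i _).trans h

@[simps]
def exchange {m n : ℕ} {u v : Multiset ℕ} (hv : ∀ i ∈ v, 0 < i) (huv : m + v.sum = n + u.sum)
    (l : m.Partition) (hl : u ≤ l.parts) : n.Partition where
  parts := v + (l.parts - u)
  parts_pos {i} hi := (Multiset.mem_add.1 hi).elim (hv i) fun h ↦
    l.parts_pos (Multiset.mem_of_le tsub_le_self h)
  parts_sum := by
    have h := congrArg Multiset.sum (tsub_add_cancel_of_le hl)
    rw [Multiset.sum_add, l.parts_sum] at h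
    rw [Multiset.sum_add]
    omega

theorem exchange_mem_restricted {p : ℕ → Prop} [DecidablePred p] {m n : ℕ} {u v : Multiset ℕ}
    (hv : ∀ i ∈ v, 0 < i) (hvp : ∀ i ∈ v, p i) (huv : m + v.sum = n + u.sum) {l : m.Partition}
    (hl : u ≤ l.parts) (hlp : l ∈ restricted m p) : exchange hv huv l hl ∈ restricted n p := by
  simp only [restricted, mem_filter, mem_univ, true_and, exchange_parts, Multiset.mem_add] at hlp ⊢
  rintro i (hi | hi)
  exacts [hvp i hi, hlp i (Multiset.mem_of_le tsub_le_self hi)]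

theorem sum_restricted_exchange {M : Type*} [AddCommMonoid M] {p : ℕ → Prop} [DecidablePred p]
    {m n : ℕ} {u v : Multiset ℕ} (hp : ∀ i, p i → 0 < i) (hu : ∀ i ∈ u, p i) (hv : ∀ i ∈ v, p i)
    (huv : m + v.sum = n + u.sum) (g : Multiset ℕ → M) :
    ∑ l ∈ restricted m p with u ≤ l.parts, g (l.parts - u) =
      ∑ l ∈ restricted n p with v ≤ l.parts, g (l.parts - v) := by
  have hv₀ i hi : 0 < i := hp i (hv i hi)
  have hu₀ i hi : 0 < i := hp i (hu i hi)
  refine sum_bij' (fun l hl ↦ exchange hv₀ huv l (mem_filter.1 hl).2)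
    (fun l hl ↦ exchange hu₀ huv.symm l (mem_filter.1 hl).2) (fun l hl ↦ ?_) (fun l hl ↦ ?_)
    (fun l hl ↦ ?_) (fun l hl ↦ ?_) (fun l hl ↦ ?_)
  · exact mem_filter.2 ⟨exchange_mem_restricted _ hv _ _ (mem_filter.1 hl).1,
      Multiset.le_add_right _ _⟩
  · exact mem_filter.2 ⟨exchange_mem_restricted _ hu _ _ (mem_filter.1 hl).1,
      Multiset.le_add_right _ _⟩
  · ext1
    simp only [exchange_parts, add_tsub_cancel_left]
    exact add_tsub_cancel_of_le (mem_filter.1 hl).2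
  · ext1
    simp only [exchange_parts, add_tsub_cancel_left]
    exact add_tsub_cancel_of_le (mem_filter.1 hl).2
  · simp only [exchange_parts, add_tsub_cancel_left]

end Nat.Partition

theorem Nat.choose_two_eq_sum_range (m : ℕ) :
    m.choose 2 = ∑ k ∈ range (m / 2), (2 * (m - 2 * (k + 1)) + 1) := by
  induction m using Nat.twoStepInduction with
  | zero | one => rfl
  | more m ih _ =>
    have shift : ∀ k ∈ range (m / 2),
        2 * (m + 2 - 2 * (k + 1 + 1)) + 1 = 2 * (m - 2 * (k + 1)) + 1 := by
      intro k _; omega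
    have hchoose : (m + 2).choose 2 = m.choose 2 + (2 * m + 1) := by
      simp only [Nat.choose_succ_succ, Nat.choose_zero_right, Nat.succ_eq_add_one, zero_add,
        Nat.choose_one_right, Nat.reduceAdd]
      omega
    rw [show (m + 2) / 2 = m / 2 + 1 by omega, sum_range_succ', sum_congr rfl shift, ← ih, hchoose]
    omega

theorem Nat.choose_two_eq_sum_range_ite {m N : ℕ} (h : m ≤ N) :
    m.choose 2 = ∑ k ∈ range N, if 2 * (k + 1) ≤ m then 2 * (m - 2 * (k + 1)) + 1 else 0 := by
  have hfilter : {k ∈ range N | 2 * (k + 1) ≤ m} = range (m / 2) := by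
    ext k
    simp only [mem_range, mem_filter]
    omega
  rw [sum_ite, sum_const_zero, add_zero, hfilter, Nat.choose_two_eq_sum_range]

theorem sum_range_ite_succ_le {M : Type*} [AddCommMonoid M] {m N : ℕ} (h : m ≤ N) (c : M) :
    ∑ k ∈ range N, (if k + 1 ≤ m then c else 0) = m • c := by
  have hfilter : {k ∈ range N | k + 1 ≤ m} = range m := by
    ext k
    simp only [mem_range, mem_filter]
    omega
  rw [sum_ite, sum_const_zero, add_zero, sum_const, hfilter, card_range]

open Nat.Partition

open Classical in
theorem binaryPartitions_eq_restricted (n : ℕ) :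
    binaryPartitions n = restricted n (∃ i : ℕ, · = 2 ^ i) := by
  ext l
  simp only [binaryPartitions, restricted]

theorem sum_binaryPartitions_exchange {M : Type*} [AddCommMonoid M] {m n : ℕ} {u v : Multiset ℕ}
    (hu : ∀ i ∈ u, ∃ j : ℕ, i = 2 ^ j) (hv : ∀ i ∈ v, ∃ j : ℕ, i = 2 ^ j)
    (huv : m + v.sum = n + u.sum) (g : Multiset ℕ → M) :
    ∑ l ∈ binaryPartitions m with u ≤ l.parts, g (l.parts - u) =
      ∑ l ∈ binaryPartitions n with v ≤ l.parts, g (l.parts - v) := by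
  classical
  simp only [binaryPartitions_eq_restricted]
  exact sum_restricted_exchange (by rintro _ ⟨j, rfl⟩; positivity) hu hv huv g

theorem b_succ_eq_sum (n : ℕ) :
    b (n + 1) = ∑ l ∈ binaryPartitions n, (l.parts.count 1 + 1) * l.parts.count 2 := by
  have h := sum_binaryPartitions_exchange (u := 0) (v := {1}) (m := n) (n := n + 1)
    (by simp) (fun _ hi ↦ ⟨0, Multiset.mem_singleton.1 hi⟩) (by simp)
    fun s ↦ (s.count 1 + 1) * s.count 2
  rw [filter_true_of_mem fun l _ ↦ Multiset.zero_le l.parts] at h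
  simp only [tsub_zero, Multiset.singleton_le] at h
  calc b (n + 1)
      = ∑ l ∈ binaryPartitions (n + 1) with 1 ∈ l.parts, l.parts.count 1 * l.parts.count 2 := by
        refine (sum_filter_of_ne fun l _ hne ↦ ?_).symm
        exact Multiset.count_ne_zero.1 (left_ne_zero_of_mul hne)
    _ = ∑ l ∈ binaryPartitions (n + 1) with 1 ∈ l.parts,
          ((l.parts - {1}).count 1 + 1) * (l.parts - {1}).count 2 := by
        refine sum_congr rfl fun l hl ↦ ?_
        have h1 := Multiset.one_le_count_iff_mem.2 (mem_filter.1 hl).2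
        simp only [Multiset.count_sub, Multiset.count_singleton_self, Multiset.count_singleton,
          if_neg (by norm_num : (2 : ℕ) ≠ 1), tsub_zero, Nat.sub_add_cancel h1]
    _ = _ := h.symm

theorem sum_binaryPartitions_ones_eq_sum_twos (n k : ℕ) :
    ∑ l ∈ binaryPartitions n with 2 * k ≤ l.parts.count 1, (2 * (l.parts.count 1 - 2 * k) + 1) =
      ∑ l ∈ binaryPartitions n with k ≤ l.parts.count 2, (2 * l.parts.count 1 + 1) := by
  have h := sum_binaryPartitions_exchange (u := .replicate (2 * k) 1) (v := .replicate k 2)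
    (m := n) (n := n) (fun _ hi ↦ ⟨0, Multiset.eq_of_mem_replicate hi⟩)
    (fun _ hi ↦ ⟨1, Multiset.eq_of_mem_replicate hi⟩)
    (by simp [mul_comm]) fun s ↦ 2 * s.count 1 + 1
  simpa only [← Multiset.le_count_iff_replicate_le, Multiset.count_sub,
    Multiset.count_replicate_self, Multiset.count_replicate, if_neg (by norm_num : (2 : ℕ) ≠ 1),
    tsub_zero] using h

theorem a_eq_sum (n : ℕ) :
    a n = ∑ l ∈ binaryPartitions n, (2 * l.parts.count 1 + 1) * l.parts.count 2 := by
  calc a n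
      = ∑ l ∈ binaryPartitions n, ∑ k ∈ range n,
          if 2 * (k + 1) ≤ l.parts.count 1 then 2 * (l.parts.count 1 - 2 * (k + 1)) + 1 else 0 :=
        sum_congr rfl fun l _ ↦ Nat.choose_two_eq_sum_range_ite (l.count_parts_le 1)
    _ = ∑ k ∈ range n, ∑ l ∈ binaryPartitions n,
          if k + 1 ≤ l.parts.count 2 then 2 * l.parts.count 1 + 1 else 0 := by
        rw [sum_comm]
        refine sum_congr rfl fun k _ ↦ ?_
        rw [← sum_filter, ← sum_filter, sum_binaryPartitions_ones_eq_sum_twos]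
    _ = _ := by
        rw [sum_comm]
        refine sum_congr rfl fun l _ ↦ ?_
        rw [sum_range_ite_succ_le (l.count_parts_le 2), smul_eq_mul, mul_comm]

theorem stmt_11 (n : ℕ) :
    a n = b n + b (n + 1) := by
  rw [a_eq_sum, b_succ_eq_sum, b, ← sum_add_distrib]
  exact sum_congr rfl fun l _ ↦ by ring
end
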